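/- Iterated half-averaging: for any finite set S ⊆ (F_q^n)^d where each point has nonzero first block coordinates in a t-dimensional subspace, there is a chain S = S₀ ⊇ S₁ ⊇ ... ⊇ S_d where at each step i a nonzero linear form fᵢ in t variables vanishes on at least a (q^{t-1}−1)/(q^t−1) fraction of S_{i-1}, so that |S_d| ≤ (1 − 1/q + (q−1)/(q(q^t−1)))^d |S|. -/

import Mathlib

/-!
A nonzero vector `v ∈ F_q^t` is killed by exactly `q^(t-1) - 1` of the `q^t - 1` nonzero linear
forms, since the kernel of `l ↦ l ⬝ᵥ v` is a hyperplane. Double counting the pairs (form, point)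
therefore yields a nonzero form vanishing on at least that fraction of any finite family of
nonzero vectors. Discarding the points where it vanishes shrinks the set by the factor
`1 - (q^(t-1) - 1)/(q^t - 1) = 1 - 1/q + (q-1)/(q(q^t - 1))`, and doing this once for each of the
`d` blocks gives the bound.
-/

open Finset Matrix

theorem Module.Dual.natCard_ker_mul_natCard {K V : Type*} [Field K] [Finite K] [AddCommGroup V]
    [Module K V] [Module.Finite K V] {f : Module.Dual K V} (hf : f ≠ 0) :
    Nat.card (LinearMap.ker f) * Nat.card K = Nat.card V := by
  rw [Module.natCard_eq_pow_finrank (K := K) (V := LinearMap.ker f),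
    Module.natCard_eq_pow_finrank (K := K) (V := V),
    ← Module.Dual.finrank_ker_add_one_of_ne_zero hf, pow_succ]

theorem Finset.exists_mul_card_le_card_filter {α β : Type*} {s : Finset α} {T : Finset β}
    (r : α → β → Prop) [∀ a b, Decidable (r a b)] (hs : s.Nonempty) {ρ : ℝ}
    (hρ : ∀ b ∈ T, (#{a ∈ s | r a b} : ℝ) = ρ * #s) :
    ∃ a ∈ s, ρ * #T ≤ #{b ∈ T | r a b} := by
  refine exists_le_of_sum_le hs (le_of_eq ?_)
  have hcount := sum_card_bipartiteAbove_eq_sum_card_bipartiteBelow (s := s) (t := T) r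
  simp only [bipartiteAbove, bipartiteBelow] at hcount
  rw [sum_const, nsmul_eq_mul, ← Nat.cast_sum, hcount, Nat.cast_sum, sum_congr rfl hρ, sum_const,
    nsmul_eq_mul]
  ring

theorem Finset.card_filter_not_le_of_mul_card_le {α : Type*} {s : Finset α} {p : α → Prop}
    [DecidablePred p] {ρ : ℝ} (h : ρ * #s ≤ #{a ∈ s | p a}) :
    (#{a ∈ s | ¬p a} : ℝ) ≤ (1 - ρ) * #s := by
  have hsplit : (#{a ∈ s | p a} : ℝ) + #{a ∈ s | ¬p a} = #s := by
    exact_mod_cast card_filter_add_card_filter_not p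
  linarith

theorem Fin.le_pow_mul_of_le_mul_castSucc {R : Type*} [CommSemiring R] [PartialOrder R]
    [IsOrderedRing R] {d : ℕ} {u : Fin (d + 1) → R} {r : R} (hr : 0 ≤ r)
    (h : ∀ i : Fin d, u i.succ ≤ r * u i.castSucc) (i : Fin (d + 1)) :
    u i ≤ r ^ (i : ℕ) * u 0 := by
  induction i using Fin.induction with
  | zero => simp
  | succ i ih =>
    calc u i.succ ≤ r * u i.castSucc := h i
      _ ≤ r * (r ^ (i : ℕ) * u 0) := by gcongr; exact ih
      _ = r ^ (i.succ : ℕ) * u 0 := by rw [Fin.val_succ, pow_succ]; ring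

theorem one_sub_div_pow_sub_one {K : Type*} [Field K] {x : K} (hx : x ≠ 0) {t : ℕ} (ht : 0 < t)
    (hxt : x ^ t ≠ 1) :
    1 - (x ^ (t - 1) - 1) / (x ^ t - 1) = 1 - 1 / x + (x - 1) / (x * (x ^ t - 1)) := by
  obtain ⟨s, rfl⟩ : ∃ s, t = s + 1 := ⟨t - 1, by omega⟩
  have : x ^ (s + 1) - 1 ≠ 0 := sub_ne_zero.mpr hxt
  rw [Nat.add_sub_cancel]
  field_simp
  ring

section DotProduct

variable {K ι : Type*} [Field K] [Fintype K] [Fintype ι] [DecidableEq ι] [DecidableEq K]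

theorem card_filter_dotProduct_eq_zero_mul_card {v : ι → K} (hv : v ≠ 0) :
    #{l : ι → K | l ⬝ᵥ v = 0} * Fintype.card K = Fintype.card K ^ Fintype.card ι := by
  have hf : dotProductEquiv K ι v ≠ 0 := (LinearEquiv.map_ne_zero_iff _).mpr hv
  have hker : Nat.card (LinearMap.ker (dotProductEquiv K ι v)) = #{l : ι → K | l ⬝ᵥ v = 0} := by
    rw [← Fintype.card_subtype, ← Nat.card_eq_fintype_card]
    exact Nat.card_congr (Equiv.subtypeEquivRight fun l => by simp [dotProduct_comm])
  rw [← hker, Fintype.card_eq_nat_card, Module.Dual.natCard_ker_mul_natCard hf, Nat.card_fun,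
    Nat.card_eq_fintype_card (α := ι)]

theorem card_filter_ne_zero_add_one :
    #{l : ι → K | l ≠ 0} + 1 = Fintype.card K ^ Fintype.card ι := by
  rw [filter_ne', card_erase_add_one (mem_univ _), card_univ, Fintype.card_fun]

theorem card_filter_ne_zero_dotProduct_eq_zero_add_one {v : ι → K} (hv : v ≠ 0) :
    (#{l : ι → K | l ≠ 0 ∧ l ⬝ᵥ v = 0} + 1) * Fintype.card K =
      Fintype.card K ^ Fintype.card ι := by
  have herase : ({l : ι → K | l ≠ 0 ∧ l ⬝ᵥ v = 0} : Finset _) =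
      ({l | l ⬝ᵥ v = 0} : Finset _).erase 0 := by
    ext l; simp [and_comm]
  rw [herase, card_erase_add_one (by simp), card_filter_dotProduct_eq_zero_mul_card hv]

theorem exists_ne_zero_mul_card_le_card_filter_dotProduct_eq_zero [Nonempty ι] {α : Type*}
    (T : Finset α) (g : α → ι → K) (hg : ∀ a ∈ T, g a ≠ 0) :
    ∃ l : ι → K, l ≠ 0 ∧
      ((Fintype.card K : ℝ) ^ (Fintype.card ι - 1) - 1) /
          ((Fintype.card K : ℝ) ^ Fintype.card ι - 1) * #T ≤ #{a ∈ T | l ⬝ᵥ g a = 0} := by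
  set n := Fintype.card ι
  have hn : n = n - 1 + 1 := (Nat.sub_add_cancel Fintype.card_pos).symm
  have hq : (1 : ℝ) < Fintype.card K := by exact_mod_cast Fintype.one_lt_card (α := K)
  have hqn : (Fintype.card K : ℝ) ^ n - 1 ≠ 0 :=
    (sub_pos.mpr (one_lt_pow₀ hq Fintype.card_ne_zero)).ne'
  have hN : (#{l : ι → K | l ≠ 0} : ℝ) = (Fintype.card K : ℝ) ^ n - 1 := by
    rw [eq_sub_iff_add_eq]; exact_mod_cast card_filter_ne_zero_add_one
  have hρ : ∀ a ∈ T, (#{l ∈ ({l : ι → K | l ≠ 0} : Finset _) | l ⬝ᵥ g a = 0} : ℝ) =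
      ((Fintype.card K : ℝ) ^ (n - 1) - 1) / ((Fintype.card K : ℝ) ^ n - 1) *
        #{l : ι → K | l ≠ 0} := by
    intro a ha
    have hcard : ((#{l : ι → K | l ≠ 0 ∧ l ⬝ᵥ g a = 0} : ℝ) + 1) * Fintype.card K =
        (Fintype.card K : ℝ) ^ (n - 1) * Fintype.card K := by
      rw [← pow_succ, ← hn]
      exact_mod_cast card_filter_ne_zero_dotProduct_eq_zero_add_one (hg a ha)
    rw [filter_filter, eq_sub_of_add_eq (mul_right_cancel₀ (by positivity) hcard), hN,
      div_mul_cancel₀ _ hqn]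
  obtain ⟨l, hl, hlT⟩ := exists_mul_card_le_card_filter (fun l (a : α) => l ⬝ᵥ g a = 0)
    ⟨Pi.single (Classical.arbitrary ι) 1, by simp⟩ hρ
  exact ⟨l, (mem_filter.mp hl).2, hlT⟩

end DotProduct

open Classical in
/-- Iterated half-averaging: for any finite set `S ⊆ (F_q^t)^d` of `d`-tuples of nonzero
vectors, there is a chain `S = S₀ ⊇ S₁ ⊇ ⋯ ⊇ S_d` where at each step `i` a nonzero
linear form `λᵢ` in `t` variables vanishes on at least a `(q^{t-1}−1)/(q^t−1)` fraction
of `S_{i-1}` and `Sᵢ` consists of the points of `S_{i-1}` where `λᵢ` does not vanish,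
so that `|S_d| ≤ (1 − 1/q + (q−1)/(q(q^t−1)))^d · |S|`. -/
theorem iterated_half_averaging {F : Type*} [Field F] [Fintype F] (t d : ℕ) (ht : 0 < t)
    (S : Finset (Fin d → Fin t → F)) (hS : ∀ a ∈ S, ∀ i, a i ≠ 0) :
    ∃ C : Fin (d + 1) → Finset (Fin d → Fin t → F), ∃ lam : Fin d → Fin t → F,
      C 0 = S ∧ (∀ i, lam i ≠ 0) ∧
      (∀ i : Fin d, C i.succ =
        (C i.castSucc).filter fun a => (∑ mm : Fin t, lam i mm * a i mm) ≠ 0) ∧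
      (∀ i : Fin d,
        (((Fintype.card F : ℝ) ^ (t - 1) - 1) / ((Fintype.card F : ℝ) ^ t - 1)) *
            ((C i.castSucc).card : ℝ) ≤
          (((C i.castSucc).filter fun a =>
              (∑ mm : Fin t, lam i mm * a i mm) = 0).card : ℝ)) ∧
      ((C (Fin.last d)).card : ℝ) ≤
        (1 - 1 / (Fintype.card F : ℝ) +
            ((Fintype.card F : ℝ) - 1) /
              ((Fintype.card F : ℝ) * ((Fintype.card F : ℝ) ^ t - 1))) ^ d * (S.card : ℝ) := by
  set ρ : ℝ := ((Fintype.card F : ℝ) ^ (t - 1) - 1) / ((Fintype.card F : ℝ) ^ t - 1)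
  have hq : 1 < (Fintype.card F : ℝ) := by exact_mod_cast Fintype.one_lt_card (α := F)
  have : Nonempty (Fin t) := ⟨⟨0, ht⟩⟩
  have hstep : ∀ (i : Fin d) (T : Finset (Fin d → Fin t → F)), ∃ l : Fin t → F,
      T ⊆ S → l ≠ 0 ∧ ρ * #T ≤ #{a ∈ T | l ⬝ᵥ a i = 0} := by
    intro i T
    by_cases hT : T ⊆ S
    · obtain ⟨l, hl⟩ := exists_ne_zero_mul_card_le_card_filter_dotProduct_eq_zero T (· i)
        fun a ha => hS a (hT ha) i
      exact ⟨l, fun _ => by simpa only [Fintype.card_fin] using hl⟩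
    · exact ⟨0, fun h => absurd h hT⟩
  -- Choosing a form for every `T` (a junk one when `T ⊄ S`) makes `lam` a plain function of the
  -- current set, so the chain can be built by `Fin.induction`.
  choose lam hlam using hstep
  let C : Fin (d + 1) → Finset (Fin d → Fin t → F) :=
    Fin.induction S fun i T => {a ∈ T | lam i T ⬝ᵥ a i ≠ 0}
  have hC_succ (i : Fin d) : C i.succ = {a ∈ C i.castSucc | lam i (C i.castSucc) ⬝ᵥ a i ≠ 0} :=
    Fin.induction_succ _ _ i
  have hC_subset (i : Fin (d + 1)) : C i ⊆ S := by
    induction i using Fin.induction with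
    | zero => exact subset_rfl
    | succ i ih => exact hC_succ i ▸ (filter_subset _ _).trans ih
  have hρ : ρ ≤ 1 := div_le_one_of_le₀ (by gcongr; exacts [hq.le, Nat.sub_le t 1])
    (sub_nonneg.mpr (one_le_pow₀ hq.le))
  have hdecay := Fin.le_pow_mul_of_le_mul_castSucc (u := fun i => (#(C i) : ℝ))
    (sub_nonneg.mpr hρ) fun i =>
      hC_succ i ▸ card_filter_not_le_of_mul_card_le (hlam i _ (hC_subset _)).2
  refine ⟨C, fun i => lam i (C i.castSucc), rfl, fun i => (hlam i _ (hC_subset _)).1, hC_succ,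
    fun i => (hlam i _ (hC_subset _)).2, ?_⟩
  rw [← one_sub_div_pow_sub_one (by positivity) ht (one_lt_pow₀ hq ht.ne').ne']
  exact hdecay (Fin.last d)
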